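/- Let F₃ = (x₀−x₁)(x₁−x₂)(x₂−x₀)·{(x₀+x₁+x₂)³ + (x₀−x₁)(x₁−x₂)(x₂−x₀)} ∈ ℂ[x₀,x₁,x₂], a homogeneous sextic. The set of singular points of the plane curve {F₃ = 0} ⊂ ℙ²(ℂ) is exactly the four points (1:1:1), (1:1:−2), (1:−2:1) and (−2:1:1). -/

import Mathlib

/-!
Write `F₃ = D (S³ + D)` with `D = (x₀ - x₁)(x₁ - x₂)(x₂ - x₀)` and `S = x₀ + x₁ + x₂`, so that
`∂ᵢF₃ = ∂ᵢD (S³ + D) + D (3S² + ∂ᵢD)`. As `D` is invariant under translation along `(1, 1, 1)`,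
`∑ᵢ ∂ᵢD = 0`, and the sum of the three partials of `F₃` is `9 D S²`. Where `D = 0` the partials
are `S³ ∂ᵢD`, where `S = 0` they are `2 D ∂ᵢD`. Hence `∇F₃` vanishes exactly at the singular point
`(1:1:1)` of the three concurrent lines `D = 0`, and at the three points where the line `S = 0`
meets them.
-/

open MvPolynomial

/-- The homogeneous sextic
`F₃ = (x₀−x₁)(x₁−x₂)(x₂−x₀)·{(x₀+x₁+x₂)³ + (x₀−x₁)(x₁−x₂)(x₂−x₀)}`,
the branching locus of the singular K3 surface of discriminant 3. -/
noncomputable def F3 : MvPolynomial (Fin 3) ℂ :=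
  (X 0 - X 1) * (X 1 - X 2) * (X 2 - X 0) *
    ((X 0 + X 1 + X 2) ^ 3 + (X 0 - X 1) * (X 1 - X 2) * (X 2 - X 0))

namespace C3

section CommRing

variable {R : Type*} [CommRing R]

noncomputable def diffProd : MvPolynomial (Fin 3) R := (X 0 - X 1) * (X 1 - X 2) * (X 2 - X 0)

noncomputable def coordSum : MvPolynomial (Fin 3) R := X 0 + X 1 + X 2

theorem eval_diffProd (v : Fin 3 → R) :
    eval v diffProd = (v 0 - v 1) * (v 1 - v 2) * (v 2 - v 0) := by
  simp [diffProd]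

theorem eval_coordSum (v : Fin 3 → R) : eval v coordSum = v 0 + v 1 + v 2 := by
  simp [coordSum]

theorem pderiv_coordSum (i : Fin 3) : pderiv i (coordSum : MvPolynomial (Fin 3) R) = 1 := by
  fin_cases i <;> simp [coordSum, pderiv_X]

theorem eval_pderiv_diffProd (v : Fin 3 → R) (i : Fin 3) :
    eval v (pderiv i diffProd) = (v (i + 1) - v (i + 2)) * (v (i + 1) + v (i + 2) - 2 * v i) := by
  fin_cases i <;> simp [diffProd, pderiv_X] <;> ring

theorem sum_eval_pderiv_diffProd (v : Fin 3 → R) :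
    ∑ i, eval v (pderiv i diffProd) = 0 := by
  simp only [Fin.sum_univ_three, eval_pderiv_diffProd, Fin.isValue, zero_add, Fin.reduceAdd]
  ring

theorem eq_smul_vec3_iff {v : Fin 3 → R} {c a b d : R} :
    v = c • ![a, b, d] ↔ v 0 = c * a ∧ v 1 = c * b ∧ v 2 = c * d := by
  simp [funext_iff, Fin.forall_fin_succ]

end CommRing

section IsDomain

variable {R : Type*} [CommRing R] [IsDomain R]

theorem gradient_diffProd_eq_zero_iff [NeZero (3 : R)] (v : Fin 3 → R) :
    (∀ i, eval v (pderiv i diffProd) = 0) ↔ ∃ c : R, v = c • ![1, 1, 1] := by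
  refine ⟨fun h => ⟨v 0, ?_⟩, ?_⟩
  · have h0 := h 0
    have h1 := h 1
    simp only [eval_pderiv_diffProd, Fin.reduceAdd, mul_eq_zero, sub_eq_zero] at h0 h1
    have h10 : v 1 = v 0 := by
      rcases h0 with h0 | h0 <;> rcases h1 with h1 | h1
      · rw [h0, h1]
      · linear_combination -h0 - h1
      · linear_combination h0 - h1
      · have h3 : (3 : R) * (v 1 - v 0) = 0 := by linear_combination h0 - h1
        exact sub_eq_zero.1 ((mul_eq_zero.1 h3).resolve_left three_ne_zero)
    have h20 : v 2 = v 0 := by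
      rcases h0 with h0 | h0
      · rw [← h0, h10]
      · linear_combination h0 - h10
    rw [eq_smul_vec3_iff]
    simp [h10, h20]
  · rintro ⟨c, rfl⟩ i
    fin_cases i <;> simp [eval_pderiv_diffProd]

theorem coordSum_diffProd_eq_zero_iff (v : Fin 3 → R) :
    eval v coordSum = 0 ∧ eval v diffProd = 0 ↔
      ∃ c : R, v = c • ![1, 1, -2] ∨ v = c • ![1, -2, 1] ∨ v = c • ![-2, 1, 1] := by
  simp only [eq_smul_vec3_iff, eval_coordSum, eval_diffProd, mul_one]
  constructor
  · rintro ⟨hs, hd⟩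
    simp only [mul_eq_zero, sub_eq_zero] at hd
    rcases hd with (h01 | h12) | h20
    · exact ⟨v 0, Or.inl ⟨rfl, h01.symm, by linear_combination hs + h01⟩⟩
    · exact ⟨v 1, Or.inr (Or.inr ⟨by linear_combination hs + h12, rfl, h12.symm⟩)⟩
    · exact ⟨v 0, Or.inr (Or.inl ⟨rfl, by linear_combination hs - h20, h20⟩)⟩
  · rintro ⟨c, ⟨h0, h1, h2⟩ | ⟨h0, h1, h2⟩ | ⟨h0, h1, h2⟩⟩ <;> simp [h0, h1, h2] <;> ring

end IsDomain

theorem F3_eq_diffProd_mul : F3 = diffProd * (coordSum ^ 3 + diffProd) := rfl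

theorem eval_pderiv_F3 (v : Fin 3 → ℂ) (i : Fin 3) :
    eval v (pderiv i F3) =
      eval v (pderiv i diffProd) * (eval v coordSum ^ 3 + eval v diffProd) +
        eval v diffProd * (3 * eval v coordSum ^ 2 + eval v (pderiv i diffProd)) := by
  simp only [F3_eq_diffProd_mul, Derivation.leibniz, Derivation.leibniz_pow, pderiv_coordSum,
    map_add, map_mul, map_pow, smul_eq_mul, nsmul_eq_mul, mul_one, eval_ofNat, Nat.cast_ofNat]
  ring

theorem gradient_F3_eq_zero_iff (v : Fin 3 → ℂ) :
    (∀ i, eval v (pderiv i F3) = 0) ↔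
      (∀ i, eval v (pderiv i diffProd) = 0) ∨ (eval v coordSum = 0 ∧ eval v diffProd = 0) := by
  have hsum := sum_eval_pderiv_diffProd v
  have hδ : (∀ i, eval v (pderiv i diffProd) = 0) → eval v diffProd = 0 := by
    rw [gradient_diffProd_eq_zero_iff]
    rintro ⟨c, rfl⟩
    simp [eval_diffProd]
  simp only [eval_pderiv_F3]
  set s := eval v coordSum
  set δ := eval v diffProd
  simp only [Fin.sum_univ_three] at hsum
  constructor
  · intro h
    have hδs : δ * s ^ 2 = 0 := by
      linear_combination (h 0 + h 1 + h 2 - (s ^ 3 + 2 * δ) * hsum) / 9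
    rcases mul_eq_zero.1 hδs with hδ0 | hs
    · by_cases hs : s = 0
      · exact Or.inr ⟨hs, hδ0⟩
      refine Or.inl fun i => ?_
      simpa [hδ0, hs] using h i
    · replace hs : s = 0 := pow_eq_zero_iff two_ne_zero |>.1 hs
      by_cases hδ0 : δ = 0
      · exact Or.inr ⟨hs, hδ0⟩
      refine Or.inl fun i => ?_
      have h2 : 2 * δ * eval v (pderiv i diffProd) = 0 := by
        linear_combination h i - (s ^ 2 * eval v (pderiv i diffProd) + 3 * δ * s) * hs
      simpa [hδ0] using h2
  · rintro (hd | ⟨hs, hδ0⟩) i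
    · simp [hd i, hδ hd]
    · simp [hs, hδ0]

end C3

/-- The set of singular points of the plane sextic `{F₃ = 0} ⊂ ℙ²(ℂ)` is exactly the four
points `(1:1:1)`, `(1:1:−2)`, `(1:−2:1)` and `(−2:1:1)`. -/
theorem singular_points_of_C3 (v : Fin 3 → ℂ) (hv : v ≠ 0) :
    (∀ i : Fin 3, MvPolynomial.eval v (MvPolynomial.pderiv i F3) = 0) ↔
      ∃ c : ℂ, c ≠ 0 ∧
        (v = c • ![1, 1, 1] ∨ v = c • ![1, 1, -2] ∨ v = c • ![1, -2, 1] ∨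
          v = c • ![-2, 1, 1]) := by
  rw [C3.gradient_F3_eq_zero_iff, C3.gradient_diffProd_eq_zero_iff,
    C3.coordSum_diffProd_eq_zero_iff, ← exists_or]
  refine exists_congr fun c => (and_iff_right_of_imp ?_).symm
  rintro h rfl
  apply hv
  rcases h with rfl | rfl | rfl | rfl <;> exact zero_smul _ _
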